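/- arXiv:1509.09181 — 3 statements merged into one kernel-verified Lean document; each statement's English description precedes it below -/
import Mathlib

section
/- Let Ω : ℕ → ℚ be a sequence and define c : ℕ → ℚ by the expansion exp( − Σ_{m≥1} (1/m)·(Σ_{d ∣ m} d·Ω(d))·X^m ) = 1 − Σ_{n≥1} c(n)·X^n in ℚ⟦X⟧. Then for every n ≥ 1, n·Ω(n) = n·c(n) + Σ_{k=1}^{n−1} (Σ_{g ∣ k} g·Ω(g))·c(n−k) − Σ_{g ∣ n, g ≠ n} g·Ω(g). (Theorem 3.3, formula (3.12): the recursion expressing the exponents Ω(n) of the product form ∏(1−z^N)^{Ω(N)} of the Feynman identity in terms of the coefficients c₊(n).) -/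
/-!
Writing `E = exp g` with `g = -Σ_{m≥1} (b m / m) X^m`, `b m = Σ_{d ∣ m} d Ω(d)`, the chain rule
gives the logarithmic-derivative identity `X E' = (X g') E` with `X g' = -Σ b m X^m`. Comparing
coefficients of `X^n` yields `n E_n = -Σ_{k=0}^{n} b k E_{n-k}`; inserting `E_0 = 1`,
`E_m = -c m` and `b n = n Ω(n) + Σ_{g ∣ n, g ≠ n} g Ω(g)` gives the recursion.
-/

open Finset PowerSeries

/-- The formal exponential `exp(f) = Σ_{k≥0} f^k/k!` of a power series `f` with zero
constant term. -/
noncomputable def formalExp (f : PowerSeries ℚ) : PowerSeries ℚ :=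
  PowerSeries.mk fun n =>
    ∑ k ∈ Finset.range (n + 1), PowerSeries.coeff n (f ^ k) / (Nat.factorial k : ℚ)

lemma formalExp_eq_subst_exp {g : ℚ⟦X⟧} (hg : constantCoeff g = 0) :
    formalExp g = (exp ℚ).subst g := by
  ext n
  rw [coeff_subst' (HasSubst.of_constantCoeff_zero' hg), formalExp, coeff_mk,
    finsum_eq_sum_of_support_subset _ (s := range (n + 1))]
  · exact sum_congr rfl fun k _ => by simp [div_eq_inv_mul]
  · intro k hk
    by_contra hkn
    simp only [coe_range, Set.mem_Iio, not_lt] at hkn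
    have hnk : (n : ℕ∞) < (g ^ k).order :=
      lt_of_lt_of_le (by exact_mod_cast hkn) (le_order_pow_of_constantCoeff_eq_zero k hg)
    exact hk (by simp [coeff_of_lt_order n hnk])

lemma derivative_formalExp {g : ℚ⟦X⟧} (hg : constantCoeff g = 0) :
    d⁄dX ℚ (formalExp g) = formalExp g * d⁄dX ℚ g := by
  rw [formalExp_eq_subst_exp hg, derivative_subst (HasSubst.of_constantCoeff_zero' hg),
    derivative_exp]

lemma coeff_zero_formalExp (g : ℚ⟦X⟧) : coeff 0 (formalExp g) = 1 := by
  simp [formalExp]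

lemma coeff_X_mul_derivative {R : Type*} [CommSemiring R] (f : R⟦X⟧) (n : ℕ) :
    coeff n (X * d⁄dX R f) = n * coeff n f := by
  cases n with
  | zero => simp
  | succ n => rw [coeff_succ_X_mul, coeff_derivative, mul_comm]; push_cast; rfl

lemma natCast_mul_coeff_formalExp {g : ℚ⟦X⟧} (hg : constantCoeff g = 0) (n : ℕ) :
    n * coeff n (formalExp g) =
      ∑ k ∈ range (n + 1), coeff k (X * d⁄dX ℚ g) * coeff (n - k) (formalExp g) := by
  rw [← coeff_X_mul_derivative, derivative_formalExp hg, mul_left_comm, mul_comm, coeff_mul,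
    Nat.sum_antidiagonal_eq_sum_range_succ
      (fun i j => coeff i (X * d⁄dX ℚ g) * coeff j (formalExp g))]

lemma sum_range_succ_eq_add_sum_Icc_add {M : Type*} [AddCommMonoid M] (f : ℕ → M) {n : ℕ}
    (hn : 1 ≤ n) : ∑ k ∈ range (n + 1), f k = f 0 + ∑ k ∈ Icc 1 (n - 1), f k + f n := by
  obtain ⟨m, rfl⟩ : ∃ m, n = m + 1 := ⟨n - 1, by omega⟩
  rw [range_eq_Ico, sum_eq_sum_Ico_succ_bot (by omega), sum_Ico_succ_top (by omega),
    Nat.add_sub_cancel, Ico_add_one_right_eq_Icc, add_assoc]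

lemma sum_divisors_eq_add_sum_properDivisors {M : Type*} [AddCommMonoid M] (f : ℕ → M) {n : ℕ}
    (hn : n ≠ 0) : ∑ d ∈ n.divisors, f d = f n + ∑ d ∈ n.properDivisors, f d := by
  rw [← Nat.cons_self_properDivisors hn, sum_cons]

/-- Theorem 3.3, formula (3.12): the recursion expressing the
exponents `Ω(n)` of the product form of the Feynman identity in terms of the
coefficients `c(n)` of `exp(−Σ_{m≥1} (1/m)(Σ_{d∣m} d·Ω(d)) X^m) = 1 − Σ c(n) X^n`. -/
theorem Omega_recursion (Ω c : ℕ → ℚ)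
    (hc : ∀ n : ℕ, 1 ≤ n → c n = - PowerSeries.coeff n
      (formalExp (- PowerSeries.mk fun m =>
        if m = 0 then 0 else (1 / (m : ℚ)) * ∑ d ∈ m.divisors, (d : ℚ) * Ω d))) :
    ∀ n : ℕ, 1 ≤ n →
      (n : ℚ) * Ω n = (n : ℚ) * c n
        + ∑ k ∈ Finset.Icc 1 (n - 1), (∑ g ∈ k.divisors, (g : ℚ) * Ω g) * c (n - k)
        - ∑ g ∈ n.properDivisors, (g : ℚ) * Ω g := by
  intro n hn
  set b : ℕ → ℚ := fun m => ∑ d ∈ m.divisors, (d : ℚ) * Ω d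
  set g : ℚ⟦X⟧ := - PowerSeries.mk fun m => if m = 0 then 0 else (1 / (m : ℚ)) * b m
  have hg : constantCoeff g = 0 := by rw [← coeff_zero_eq_constantCoeff_apply]; simp [g]
  have hXg : X * d⁄dX ℚ g = - PowerSeries.mk b := by
    ext m
    rw [coeff_X_mul_derivative]
    rcases eq_or_ne m 0 with rfl | hm
    · simp [b]
    · simp [g, hm]
  have hE : ∀ m, 1 ≤ m → coeff m (formalExp g) = - c m := fun m hm => by rw [hc m hm, neg_neg]
  have hrec := natCast_mul_coeff_formalExp hg n
  rw [hXg, sum_range_succ_eq_add_sum_Icc_add _ hn, hE n hn, Nat.sub_self, coeff_zero_formalExp,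
    sum_congr rfl fun k hk => by rw [hE (n - k) (by simp at hk; omega)]] at hrec
  have hb : b n = n * Ω n + ∑ d ∈ n.properDivisors, (d : ℚ) * Ω d :=
    sum_divisors_eq_add_sum_properDivisors _ (by omega)
  simp only [map_neg, coeff_mk, b, Nat.divisors_zero, sum_empty, neg_zero, zero_mul, zero_add,
    neg_mul, mul_neg, neg_neg, mul_one] at hrec hb
  linear_combination hrec - hb
end

section
/- Fix t ∈ ℕ and let α : ℕ → ℤ be the coefficients of the power series ((1+X)·(1−X)^{−1})^t = Σ_{m≥0} α_m·X^m in ℤ⟦X⟧ (equivalently, of (1 + 2Σ_{k≥1} X^k)^t). Then α₀ = 1 and for every m ≥ 1, m·α_m = 2·Σ_{k=1}^{m} (k·t − m + k)·α_{m−k}. In particular every α_m with m ≥ 1 is even. (The coefficient recursion established in the proof of Theorem 4.1.) -/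
/-!
With `S = ∑_{k ≥ 1} X^k` one has `(1 + X)(1 - X)⁻¹ = 1 + 2S =: f`. The Euler operator
`θ = X · d/dX` multiplies the `m`-th coefficient by `m`, satisfies `f · θ(f^t) = t f^t θ f`, and
`θ S = ∑ k X^k`; so `f · θ(f^t) = 2t (∑ k X^k) f^t`, whose `m`-th coefficient is the recursion.
Evenness: `(1 + 2S)^t - 1` is divisible by `(1 + 2S) - 1 = 2S`.
-/

open Finset PowerSeries

theorem Derivation.smul_map_pow {R A M : Type*} [CommSemiring R] [CommSemiring A]
    [AddCommMonoid M] [Algebra R A] [Module A M] [Module R M]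
    (D : Derivation R A M) (a : A) (n : ℕ) : a • D (a ^ n) = n • a ^ n • D a := by
  rcases n with _ | n
  · simp
  · rw [D.leibniz_pow, Nat.add_sub_cancel, smul_comm a (n + 1), smul_smul, ← pow_succ']

namespace PowerSeries

variable (R : Type*) [CommRing R]

noncomputable def geomTail : R⟦X⟧ :=
  mk fun n => if n = 0 then 0 else 1

variable {R}

theorem ring_inverse_one_sub_X : Ring.inverse (1 - X : R⟦X⟧) = mk 1 := by
  have hunit : IsUnit (1 - X : R⟦X⟧) := isUnit_iff_constantCoeff.mpr (by simp)
  simpa using (Ring.inverse_mul_eq_iff_eq_mul _ 1 _ hunit).mpr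
    (by rw [mul_comm, mk_one_mul_one_sub_eq_one])

theorem coeff_two_mul (p : R⟦X⟧) (n : ℕ) : coeff n (2 * p) = 2 * coeff n p := by
  rw [← map_ofNat C, coeff_C_mul]

theorem one_add_X_mul_mk_one : (1 + X) * mk 1 = 1 + 2 * geomTail R := by
  ext (_ | n) <;> simp [geomTail, add_mul, coeff_succ_X_mul, coeff_two_mul, one_add_one_eq_two]

theorem coeff_X_mul_derivative (p : R⟦X⟧) (n : ℕ) :
    coeff n (X * derivative R p) = n * coeff n p := by
  rcases n with _ | n <;> simp [coeff_succ_X_mul, coeff_derivative, mul_comm]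

theorem X_mul_derivative_geomTail : X * derivative R (geomTail R) = mk fun n => (n : R) := by
  ext n
  by_cases hn : n = 0 <;> simp [coeff_X_mul_derivative, geomTail, hn]

theorem coeff_mk_mul_eq_sum_Icc (w : ℕ → R) (hw : w 0 = 0) (p : R⟦X⟧) (m : ℕ) :
    coeff m (mk w * p) = ∑ k ∈ Icc 1 m, w k * coeff (m - k) p := by
  rw [coeff_mul, Nat.sum_antidiagonal_eq_sum_range_succ (fun i j => coeff i (mk w) * coeff j p),
    range_eq_Ico, sum_eq_sum_Ico_succ_bot m.succ_pos, ← Ico_add_one_right_eq_Icc]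
  simp [hw]

theorem coeff_geomTail_mul (p : R⟦X⟧) (m : ℕ) :
    coeff m (geomTail R * p) = ∑ k ∈ Icc 1 m, coeff (m - k) p := by
  rw [geomTail, coeff_mk_mul_eq_sum_Icc _ (by simp)]
  exact sum_congr rfl fun k hk => by simp [(Nat.one_le_iff_ne_zero.1 (mem_Icc.1 hk).1)]

theorem one_add_two_geomTail_mul_X_mul_derivative_pow (t : ℕ) :
    (1 + 2 * geomTail R) * (X * derivative R ((1 + 2 * geomTail R) ^ t)) =
      C (2 * (t : R)) * ((mk fun n => (n : R)) * (1 + 2 * geomTail R) ^ t) := by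
  have hpow := (derivative R).smul_map_pow (1 + 2 * geomTail R) t
  have hD2 : derivative R (2 : R⟦X⟧) = 0 := by exact_mod_cast (derivative R).map_natCast 2
  simp only [smul_eq_mul, nsmul_eq_mul, map_add, Derivation.leibniz, Derivation.map_one_eq_zero,
    hD2] at hpow
  rw [← X_mul_derivative_geomTail, map_mul, map_ofNat, map_natCast]
  linear_combination X * hpow

theorem coeff_one_add_two_geomTail_pow_recursion (t m : ℕ) :
    (m : R) * coeff m ((1 + 2 * geomTail R) ^ t) =
      2 * ∑ k ∈ Icc 1 m, ((k : R) * t - m + k) * coeff (m - k) ((1 + 2 * geomTail R) ^ t) := by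
  set g := (1 + 2 * geomTail R) ^ t
  have h := congrArg (coeff m) (one_add_two_geomTail_mul_X_mul_derivative_pow (R := R) t)
  rw [add_mul, one_mul, map_add, mul_assoc, coeff_two_mul, coeff_C_mul, coeff_geomTail_mul,
    coeff_mk_mul_eq_sum_Icc _ (by simp)] at h
  simp only [coeff_X_mul_derivative] at h
  have hsum : ∑ k ∈ Icc 1 m, ((k : R) * t - m + k) * coeff (m - k) g =
      t * ∑ k ∈ Icc 1 m, k * coeff (m - k) g -
        ∑ k ∈ Icc 1 m, ((m - k : ℕ) : R) * coeff (m - k) g := by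
    rw [mul_sum, ← sum_sub_distrib]
    refine sum_congr rfl fun k hk => ?_
    rw [Nat.cast_sub (mem_Icc.1 hk).2]
    ring
  rw [hsum]
  linear_combination h

theorem two_dvd_coeff_one_add_two_mul_pow (p : R⟦X⟧) (t : ℕ) {n : ℕ} (hn : n ≠ 0) :
    2 ∣ coeff n ((1 + 2 * p) ^ t) := by
  obtain ⟨q, hq⟩ : 2 ∣ (1 + 2 * p) ^ t - 1 :=
    (dvd_mul_right 2 p).trans (by simpa using sub_dvd_pow_sub_pow (1 + 2 * p) 1 t)
  have : coeff n ((1 + 2 * p) ^ t) = coeff n ((1 + 2 * p) ^ t - 1) := by simp [coeff_one, hn]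
  exact ⟨coeff n q, by rw [this, hq, coeff_two_mul]⟩

end PowerSeries

/-- the coefficient recursion in the proof of Theorem 4.1: for the
coefficients `α_m` of `((1+X)(1−X)^{−1})^t ∈ ℤ⟦X⟧` one has `α₀ = 1`,
`m·α_m = 2·Σ_{k=1}^{m} (k·t − m + k)·α_{m−k}` for `m ≥ 1`, and in particular every
`α_m` with `m ≥ 1` is even.  The inverse of the unit `1 − X` is taken via
`Ring.inverse`. -/
theorem alpha_recursion (t : ℕ) (α : ℕ → ℤ)
    (hα : ∀ m : ℕ, α m = PowerSeries.coeff m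
      (((1 + PowerSeries.X) * Ring.inverse (1 - PowerSeries.X : PowerSeries ℤ)) ^ t)) :
    α 0 = 1
    ∧ (∀ m : ℕ, 1 ≤ m →
        (m : ℤ) * α m = 2 * ∑ k ∈ Finset.Icc 1 m, ((k : ℤ) * t - m + k) * α (m - k))
    ∧ ∀ m : ℕ, 1 ≤ m → 2 ∣ α m := by
  simp only [ring_inverse_one_sub_X, one_add_X_mul_mk_one] at hα
  obtain rfl : α = fun m => coeff m ((1 + 2 * geomTail ℤ) ^ t) := funext hα
  refine ⟨by simp [geomTail], fun m _ => coeff_one_add_two_geomTail_pow_recursion t m,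
    fun m hm => two_dvd_coeff_one_add_two_mul_pow _ t (by omega)⟩
end

section
/- Let R ≥ 1 be a natural number and for N ≥ 1 define the necklace number M(N;R) = (1/N)·Σ_{g ∣ N} μ(g)·R^{N/g}, where μ is the Möbius function. Then each M(N;R) is a nonnegative integer, and in ℤ⟦X⟧ the identity ∏_{N≥1} (1−X^N)^{M(N;R)} = 1 − R·X holds coefficientwise; that is, for every n ≥ 0 the coefficient of X^n in the finite product ∏_{N=1}^{n} (1−X^N)^{M(N;R)} equals the coefficient of X^n in 1 − R·X. (Proposition 1.1, the Witt identity, i.e. the (+,−,+) case of (1.3) with Witt formula (1.4): M(N;R) is the dimension of the degree-N homogeneous component of the free Lie algebra on an R-dimensional vector space.) -/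
/-!
Integrality of the necklace numbers is Gauss's congruence: for `N = p^(e+1) m` with `p ∤ m`,
only `g = h` and `g = p h` with `h ∣ m` contribute to `∑_{g ∣ N} μ(g) R^{N/g}`, which pairs the
terms into differences `y^{p^(e+1)} - y^{p^e}`, divisible by `p^(e+1)` by Fermat's little theorem.
Nonnegativity holds because `R^N` dominates `∑_{d ∣ N, d < N} R^d` when `R ≠ 1`, while for
`R = 1` the sum is `∑_{g ∣ N} μ(g) = [N = 1]`.

For the product identity, Möbius inversion gives `∑_{d ∣ k} d M(d) = R^k`. Both
`f = ∏_{N ≤ n} (1 - X^N)^{M(N)}` and `g = 1 - R X` then satisfy `X f' = H f` with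
`H ≡ -∑_{k ≥ 1} R^k X^k` up to degree `n`, and such a first-order equation determines the
coefficients up to degree `n` from the constant term.
-/

open Finset ArithmeticFunction PowerSeries
open scoped ArithmeticFunction.Moebius ArithmeticFunction.zeta

theorem Int.prime_pow_dvd_pow_sub_pow (x : ℤ) {p : ℕ} (hp : p.Prime) (e n : ℕ) :
    (p : ℤ) ^ (e + 1) ∣ x ^ (p ^ (e + 1) * n) - x ^ (p ^ e * n) := by
  have h := dvd_sub_pow_of_dvd_sub (Int.prime_dvd_pow_self_sub hp (x ^ n)) e
  rwa [← pow_mul, ← pow_mul, ← pow_mul, ← pow_succ', mul_comm n, mul_comm n] at h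

theorem Nat.sum_properDivisors_pow_le {R : ℕ} (hR : R ≠ 1) (N : ℕ) :
    ∑ d ∈ N.properDivisors, R ^ d ≤ R ^ N := by
  rcases Nat.lt_or_ge R 2 with hR2 | hR2
  · obtain rfl : R = 0 := by omega
    rw [sum_eq_zero fun d hd => zero_pow (Nat.pos_of_mem_properDivisors hd).ne']
    exact Nat.zero_le _
  · exact (Nat.geomSum_lt hR2 fun d hd => (Nat.mem_properDivisors.1 hd).2).le

namespace ArithmeticFunction

theorem sum_divisors_moebius_mul_prime_pow_mul {A : Type*} [CommRing A] (f : ℕ → A)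
    {p m e : ℕ} (hp : p.Prime) (hpm : ¬ p ∣ m) :
    ∑ g ∈ (p ^ (e + 1) * m).divisors, (μ g : A) * f (p ^ (e + 1) * m / g) =
      ∑ h ∈ m.divisors, (μ h : A) * (f (p ^ (e + 1) * (m / h)) - f (p ^ e * (m / h))) := by
  have hcop : (p ^ (e + 1)).Coprime m := .pow_left _ (hp.coprime_iff_not_dvd.2 hpm)
  have hterm : ∀ i ≤ e + 1, ∀ h ∈ m.divisors,
      (μ (p ^ i * h) : A) * f (p ^ (e + 1) * m / (p ^ i * h)) =
        μ (p ^ i) * μ h * f (p ^ (e + 1 - i) * (m / h)) := by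
    intro i hi h hh
    have hhm := Nat.dvd_of_mem_divisors hh
    rw [isMultiplicative_moebius.map_mul_of_coprime
        ((hcop.coprime_dvd_left (pow_dvd_pow p hi)).coprime_dvd_right hhm),
      Nat.mul_div_mul_comm (pow_dvd_pow p hi) hhm, Nat.pow_div hi hp.pos]
    push_cast; ring
  have hsquare : ∀ i ∈ range e, ∑ h ∈ m.divisors,
      (μ (p ^ (i + 2) * h) : A) * f (p ^ (e + 1) * m / (p ^ (i + 2) * h)) = 0 := fun i hi =>
    sum_eq_zero fun h hh => by
      rw [hterm (i + 2) (by simp at hi; omega) h hh, moebius_apply_prime_pow hp (by omega)]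
      simp
  rw [Nat.divisors_mul, Finset.mul_def, sum_image hcop.mul_injOn_divisors, sum_product,
    Nat.sum_divisors_prime_pow hp, sum_range_succ', sum_range_succ', sum_eq_zero hsquare,
    zero_add, ← sum_add_distrib]
  refine sum_congr rfl fun h hh => ?_
  rw [hterm 0 (by omega) h hh, hterm 1 (by omega) h hh, pow_zero, pow_one, moebius_apply_one,
    moebius_apply_prime hp, Nat.sub_zero, Nat.add_sub_cancel]
  push_cast
  ring

theorem prime_pow_dvd_sum_divisors_moebius_mul_pow (x : ℤ) {p m e : ℕ} (hp : p.Prime)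
    (hpm : ¬ p ∣ m) :
    (p : ℤ) ^ (e + 1) ∣
      ∑ g ∈ (p ^ (e + 1) * m).divisors, (μ g : ℤ) * x ^ (p ^ (e + 1) * m / g) := by
  have h := sum_divisors_moebius_mul_prime_pow_mul (A := ℤ) (e := e) (x ^ ·) hp hpm
  simp only [Int.cast_id] at h
  rw [h]
  exact dvd_sum fun h _ => (Int.prime_pow_dvd_pow_sub_pow x hp e (m / h)).mul_left _

theorem dvd_sum_divisors_moebius_mul_pow (x : ℤ) (N : ℕ) :
    (N : ℤ) ∣ ∑ g ∈ N.divisors, (μ g : ℤ) * x ^ (N / g) := by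
  rcases eq_or_ne N 0 with rfl | hN
  · simp
  rw [Int.natCast_dvd, Nat.dvd_iff_prime_pow_dvd_dvd]
  rintro p (_ | k) hp hpk
  · simp
  have hk : k + 1 ≤ N.factorization p := (hp.pow_dvd_iff_le_factorization hN).1 hpk
  obtain ⟨e, he⟩ : ∃ e, N.factorization p = e + 1 :=
    Nat.exists_eq_add_one_of_ne_zero (by omega)
  have hN' : p ^ (e + 1) * (N / p ^ (e + 1)) = N := he ▸ Nat.ordProj_mul_ordCompl_eq_self N p
  have hdvd := prime_pow_dvd_sum_divisors_moebius_mul_pow x hp (e := e)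
    (he ▸ Nat.not_dvd_ordCompl hp hN)
  rw [hN'] at hdvd
  rw [← Int.natCast_dvd, Nat.cast_pow]
  exact (pow_dvd_pow _ (by omega)).trans hdvd

theorem sum_divisors_moebius_mul_pow_nonneg (R N : ℕ) :
    0 ≤ ∑ g ∈ N.divisors, (μ g : ℤ) * (R : ℤ) ^ (N / g) := by
  rcases eq_or_ne R 1 with rfl | hR
  · simp only [Nat.cast_one, one_pow, mul_one]
    rw [← coe_mul_zeta_apply, moebius_mul_coe_zeta, one_apply]
    positivity
  rcases eq_or_ne N 0 with rfl | hN
  · simp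
  rw [← Nat.sum_divisorsAntidiagonal (fun a b => (μ a : ℤ) * (R : ℤ) ^ b),
    Nat.sum_divisorsAntidiagonal' (fun a b => (μ a : ℤ) * (R : ℤ) ^ b),
    ← Nat.cons_self_properDivisors hN, sum_cons,
    Nat.div_self (Nat.pos_of_ne_zero hN), moebius_apply_one, one_mul]
  have hterm : ∀ d ∈ N.properDivisors, -((R : ℤ) ^ d) ≤ μ (N / d) * (R : ℤ) ^ d := fun d _ =>
    neg_le_of_abs_le <| by
      rw [abs_mul, abs_pow, Nat.abs_cast]
      exact mul_le_of_le_one_left (by positivity) abs_moebius_le_one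
  have hbound : ∑ d ∈ N.properDivisors, (R : ℤ) ^ d ≤ (R : ℤ) ^ N := by
    exact_mod_cast Nat.sum_properDivisors_pow_le hR N
  have := sum_le_sum hterm
  rw [sum_neg_distrib] at this
  linarith

end ArithmeticFunction

def necklaceNumber (R N : ℕ) : ℕ :=
  ((∑ g ∈ N.divisors, (μ g : ℤ) * (R : ℤ) ^ (N / g)) / N).toNat

theorem natCast_mul_necklaceNumber (R N : ℕ) :
    (N : ℤ) * necklaceNumber R N = ∑ g ∈ N.divisors, (μ g : ℤ) * (R : ℤ) ^ (N / g) := by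
  rw [necklaceNumber, Int.toNat_of_nonneg (Int.ediv_nonneg
      (sum_divisors_moebius_mul_pow_nonneg R N) (Nat.cast_nonneg N)),
    Int.mul_ediv_cancel' (dvd_sum_divisors_moebius_mul_pow R N)]

theorem sum_divisors_mul_necklaceNumber (R : ℕ) {k : ℕ} (hk : 0 < k) :
    ∑ d ∈ k.divisors, (d * necklaceNumber R d : ℤ) = (R : ℤ) ^ k := by
  refine (sum_eq_iff_sum_mul_moebius_eq (f := fun d => (d * necklaceNumber R d : ℤ))).2
    (fun N _ => ?_) k hk
  simp only [Int.cast_id]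
  rw [Nat.sum_divisorsAntidiagonal (fun a b => (μ a : ℤ) * (R : ℤ) ^ b),
    natCast_mul_necklaceNumber]

namespace PowerSeries

variable {A : Type*} [CommRing A]

variable (A) in
def multiplesSeries (N : ℕ) : A⟦X⟧ :=
  mk fun k => if k ≠ 0 ∧ N ∣ k then 1 else 0

theorem one_sub_X_pow_mul_multiplesSeries {N : ℕ} (hN : N ≠ 0) :
    (1 - X ^ N) * multiplesSeries A N = X ^ N := by
  ext k
  rw [sub_mul, one_mul, map_sub, coeff_X_pow_mul', coeff_X_pow]
  simp only [multiplesSeries, coeff_mk]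
  rcases lt_trichotomy k N with hlt | rfl | hgt
  · rw [if_neg fun h => h.1 (Nat.eq_zero_of_dvd_of_lt h.2 hlt), if_neg hlt.not_ge,
      if_neg hlt.ne, sub_zero]
  · rw [if_pos ⟨hN, dvd_rfl⟩, if_pos le_rfl, Nat.sub_self, if_neg fun h => h.1 rfl, if_pos rfl,
      sub_zero]
  · have hiff : (k - N ≠ 0 ∧ N ∣ k - N) ↔ (k ≠ 0 ∧ N ∣ k) := by
      rw [Nat.dvd_sub_self_right, or_iff_left hgt.not_ge]
      exact and_congr_left fun _ => by omega
    rw [if_pos hgt.le, if_congr hiff rfl rfl, sub_self, if_neg hgt.ne']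

theorem X_mul_derivative_one_sub_X_pow {N : ℕ} (hN : N ≠ 0) :
    X * d⁄dX A (1 - X ^ N) = -(N • multiplesSeries A N) * (1 - X ^ N) := by
  rw [neg_mul, smul_mul_assoc, mul_comm _ (1 - X ^ N), one_sub_X_pow_mul_multiplesSeries hN,
    map_sub, derivative_one, derivative_pow, derivative_X]
  obtain ⟨N, rfl⟩ := Nat.exists_eq_add_one_of_ne_zero hN
  rw [Nat.add_sub_cancel, nsmul_eq_mul]
  ring

theorem X_mul_derivative_pow {f H : A⟦X⟧} (h : X * d⁄dX A f = H * f) (m : ℕ) :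
    X * d⁄dX A (f ^ m) = (m • H) * f ^ m := by
  rcases m with _ | m
  · simp
  rw [derivative_pow, nsmul_eq_mul, Nat.add_sub_cancel, pow_succ]
  linear_combination ((m + 1 : ℕ) * f ^ m : A⟦X⟧) * h

theorem X_mul_derivative_prod {ι : Type*} (s : Finset ι) {f H : ι → A⟦X⟧}
    (h : ∀ i ∈ s, X * d⁄dX A (f i) = H i * f i) :
    X * d⁄dX A (∏ i ∈ s, f i) = (∑ i ∈ s, H i) * ∏ i ∈ s, f i := by
  classical
  induction s using Finset.induction_on with
  | empty => simp
  | insert a s ha ih =>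
    rw [prod_insert ha, sum_insert ha, Derivation.leibniz, smul_eq_mul, smul_eq_mul]
    linear_combination (f a) * ih (fun i hi => h i (mem_insert_of_mem hi)) +
      (∏ i ∈ s, f i) * h a (mem_insert_self a s)

theorem coeff_X_mul_derivative_s19 (f : A⟦X⟧) (k : ℕ) :
    coeff k (X * d⁄dX A f) = k * coeff k f := by
  rcases k with _ | k
  · simp
  · rw [coeff_succ_X_mul, coeff_derivative]; push_cast; ring

theorem coeff_eq_of_X_mul_derivative_eq_mul [IsAddTorsionFree A] {f g H₁ H₂ : A⟦X⟧} {n : ℕ}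
    (hf : X * d⁄dX A f = H₁ * f) (hg : X * d⁄dX A g = H₂ * g)
    (hfg : constantCoeff f = constantCoeff g) (hH₀ : constantCoeff H₁ = 0)
    (hH : ∀ k ≤ n, coeff k H₁ = coeff k H₂) : ∀ k ≤ n, coeff k f = coeff k g := by
  intro k
  induction k using Nat.strong_induction_on with
  | _ k ih =>
  intro hk
  rcases k with _ | k
  · simpa using hfg
  have hprod : coeff (k + 1) (H₁ * f) = coeff (k + 1) (H₂ * g) := by
    rw [coeff_mul, coeff_mul]
    refine sum_congr rfl fun ij hij => ?_
    rw [HasAntidiagonal.mem_antidiagonal] at hij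
    rcases Nat.eq_zero_or_pos ij.1 with h0 | hpos
    · rw [h0, ← hH 0 (Nat.zero_le n), coeff_zero_eq_constantCoeff_apply, hH₀, zero_mul, zero_mul]
    · rw [hH ij.1 (by omega), ih ij.2 (by omega) (by omega)]
  have hcoeff : coeff (k + 1) (X * d⁄dX A f) = coeff (k + 1) (X * d⁄dX A g) := by
    rw [hf, hg, hprod]
  rw [coeff_X_mul_derivative_s19, coeff_X_mul_derivative_s19, ← nsmul_eq_mul, ← nsmul_eq_mul] at hcoeff
  exact nsmul_right_injective k.succ_ne_zero hcoeff

theorem X_mul_derivative_prod_one_sub_X_pow {s : Finset ℕ} (hs : 0 ∉ s) (M : ℕ → ℕ) :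
    X * d⁄dX A (∏ N ∈ s, (1 - X ^ N) ^ M N) =
      (-∑ N ∈ s, (M N * N) • multiplesSeries A N) * ∏ N ∈ s, (1 - X ^ N) ^ M N := by
  rw [X_mul_derivative_prod s fun N hN => X_mul_derivative_pow
    (X_mul_derivative_one_sub_X_pow fun h => hs (h ▸ hN)) (M N)]
  simp only [smul_neg, mul_smul, sum_neg_distrib]

theorem coeff_sum_smul_multiplesSeries (M : ℕ → ℕ) {n k : ℕ} (hk : k ∈ Icc 1 n) :
    coeff k (∑ N ∈ Icc 1 n, (M N * N) • multiplesSeries A N) =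
      ∑ d ∈ k.divisors, (d * M d : A) := by
  rw [mem_Icc] at hk
  have hdiv : (Icc 1 n).filter (fun N => k ≠ 0 ∧ N ∣ k) = k.divisors := by
    ext N
    simp only [mem_filter, mem_Icc, Nat.mem_divisors]
    constructor
    · rintro ⟨-, hk0, hNk⟩
      exact ⟨hNk, hk0⟩
    · rintro ⟨hNk, hk0⟩
      exact ⟨⟨Nat.pos_of_dvd_of_pos hNk (by omega), (Nat.le_of_dvd (by omega) hNk).trans hk.2⟩,
        hk0, hNk⟩
  rw [map_sum, ← hdiv, sum_filter]
  refine sum_congr rfl fun N _ => ?_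
  rw [map_nsmul, multiplesSeries, coeff_mk, nsmul_eq_mul]
  split_ifs <;> push_cast <;> ring

theorem mk_pow_mul_one_sub_C_mul_X (r : A) : mk (r ^ ·) * (1 - C r * X) = 1 := by
  simpa [rescale_mk, rescale_X] using congrArg (rescale r) (mk_one_mul_one_sub_eq_one A)

theorem coeff_prod_one_sub_X_pow_eq_coeff_one_sub_C_mul_X [IsAddTorsionFree A] (r : A)
    (M : ℕ → ℕ) {n : ℕ} (hM : ∀ k ∈ Icc 1 n, ∑ d ∈ k.divisors, (d * M d : A) = r ^ k) :
    ∀ k ≤ n, coeff k (∏ N ∈ Icc 1 n, (1 - X ^ N) ^ M N) = coeff k (1 - C r * X) := by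
  have hf := X_mul_derivative_prod_one_sub_X_pow (A := A) (s := Icc 1 n) (by simp) M
  have hg : X * d⁄dX A (1 - C r * X) = -(X * (C r * mk (r ^ ·))) * (1 - C r * X) := by
    rw [neg_mul, mul_assoc, mul_assoc, mk_pow_mul_one_sub_C_mul_X, mul_one, map_sub,
      derivative_one, Derivation.leibniz, derivative_C, derivative_X]
    simp [mul_comm]
  refine coeff_eq_of_X_mul_derivative_eq_mul hf hg ?_ ?_ fun k hk => ?_
  · rw [map_prod]
    simp only [map_sub, map_pow, map_one, constantCoeff_X, map_mul, constantCoeff_C, mul_zero,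
      sub_zero]
    exact prod_eq_one fun N hN => by rw [zero_pow (by simp at hN; omega), sub_zero, one_pow]
  · rw [← coeff_zero_eq_constantCoeff_apply, map_neg, map_sum]
    simp [multiplesSeries]
  · rcases k with _ | k
    · simp [multiplesSeries]
    rw [map_neg, map_neg, coeff_sum_smul_multiplesSeries M (by simp; omega),
      hM _ (by simp; omega), coeff_succ_X_mul, coeff_C_mul, coeff_mk, pow_succ']

end PowerSeries

theorem witt_identity_general (R : ℕ) :
    ∃ M : ℕ → ℕ,
      (∀ N : ℕ, 1 ≤ N →
        (N : ℤ) * (M N : ℤ) = ∑ g ∈ N.divisors, (moebius g : ℤ) * (R : ℤ) ^ (N / g))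
      ∧ ∀ n : ℕ,
          PowerSeries.coeff n (∏ N ∈ Finset.Icc 1 n, (1 - PowerSeries.X ^ N) ^ M N)
            = PowerSeries.coeff n (1 - PowerSeries.C (R : ℤ) * PowerSeries.X) := by
  refine ⟨necklaceNumber R, fun N _ => natCast_mul_necklaceNumber R N, fun n => ?_⟩
  refine coeff_prod_one_sub_X_pow_eq_coeff_one_sub_C_mul_X (R : ℤ) _ (fun k hk => ?_) n le_rfl
  exact sum_divisors_mul_necklaceNumber R (mem_Icc.1 hk).1

/-- Proposition 1.1, the Witt identity: for `R ≥ 1` the necklace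
numbers `M(N;R) = (1/N)·Σ_{g ∣ N} μ(g)·R^{N/g}` are nonnegative integers, and
`∏_{N≥1} (1−X^N)^{M(N;R)} = 1 − R·X` holds coefficientwise in `ℤ⟦X⟧`. -/
theorem witt_identity (R : ℕ) (hR : 1 ≤ R) :
    ∃ M : ℕ → ℕ,
      (∀ N : ℕ, 1 ≤ N →
        (N : ℤ) * (M N : ℤ) = ∑ g ∈ N.divisors, (moebius g : ℤ) * (R : ℤ) ^ (N / g))
      ∧ ∀ n : ℕ,
          PowerSeries.coeff n (∏ N ∈ Finset.Icc 1 n, (1 - PowerSeries.X ^ N) ^ M N)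
            = PowerSeries.coeff n (1 - PowerSeries.C (R : ℤ) * PowerSeries.X) :=
  witt_identity_general R
end
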